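/- arXiv:2301.06742 — 7 statements merged into one kernel-verified Lean document; each statement's English description precedes it below -/
import Mathlib

section
/- There exists a constant C > 0 such that |x_N| ≤ C·γ̄^{N/(2q)} for all N ∈ ℕ, where the exponent is a real power. (This is the geometric-decay estimate for the recursively defined coefficients γ_1^{(N)} used in the proof of Proposition 1.) -/
/-!
Bounding every `|x j|` with `j < q` by `M`, strong induction gives `|x N| ≤ M * γ̄ ^ ⌊N / q⌋`:
each of `x (N - 1), …, x (N - q)` lies at most one block of length `q` behind `N`, and the
recurrence costs one factor `∑ |γₖ| = γ̄`. Since `⌊N / q⌋ ≥ N / q - 1 ≥ N / (2q) - 1`,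
the constant `M / γ̄` absorbs the floor.
-/

open Finset

theorem Finset.abs_sum_mul_le_of_abs_le {ι : Type*} (s : Finset ι) (a b : ι → ℝ) {B : ℝ}
    (hb : ∀ i ∈ s, |b i| ≤ B) : |∑ i ∈ s, a i * b i| ≤ (∑ i ∈ s, |a i|) * B :=
  calc |∑ i ∈ s, a i * b i| ≤ ∑ i ∈ s, |a i * b i| := abs_sum_le_sum_abs _ _
    _ ≤ ∑ i ∈ s, |a i| * B := sum_le_sum fun i hi => by
        rw [abs_mul]; exact mul_le_mul_of_nonneg_left (hb i hi) (abs_nonneg _)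
    _ = (∑ i ∈ s, |a i|) * B := (sum_mul _ _ _).symm

theorem Nat.div_sub_one_le_sub_div {n k q : ℕ} (hk : k ≤ q) : n / q - 1 ≤ (n - k) / q :=
  calc n / q - 1 = (n - q * 1) / q := (Nat.sub_mul_div n q 1).symm
    _ ≤ (n - k) / q := Nat.div_le_div_right (by omega)

theorem pow_div_le_inv_mul_rpow {ρ : ℝ} (hρ0 : 0 < ρ) (hρ1 : ρ ≤ 1) (n q : ℕ) :
    ρ ^ (n / q) ≤ ρ⁻¹ * ρ ^ ((n : ℝ) / q) := by
  have hfloor : (n : ℝ) / q - 1 ≤ ((n / q : ℕ) : ℝ) := by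
    have := Nat.lt_floor_add_one ((n : ℝ) / q)
    rw [Nat.floor_div_eq_div] at this
    linarith
  calc ρ ^ (n / q) = ρ ^ ((n / q : ℕ) : ℝ) := (Real.rpow_natCast _ _).symm
    _ ≤ ρ ^ ((n : ℝ) / q - 1) := Real.rpow_le_rpow_of_exponent_ge hρ0 hρ1 hfloor
    _ = ρ⁻¹ * ρ ^ ((n : ℝ) / q) := by rw [Real.rpow_sub hρ0, Real.rpow_one, div_eq_inv_mul]

theorem abs_le_mul_pow_div_of_recurrence {q : ℕ} (hq : 0 < q) {γ x : ℕ → ℝ} {M : ℝ}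
    (hγ : ∑ k ∈ Icc 1 q, |γ k| ≤ 1) (hM : ∀ j < q, |x j| ≤ M)
    (hrec : ∀ N, q ≤ N → x N = ∑ k ∈ Icc 1 q, γ k * x (N - k)) (N : ℕ) :
    |x N| ≤ M * (∑ k ∈ Icc 1 q, |γ k|) ^ (N / q) := by
  set ρ := ∑ k ∈ Icc 1 q, |γ k|
  induction N using Nat.strong_induction_on with
  | _ N ih =>
    rcases lt_or_ge N q with hN | hN
    · rw [Nat.div_eq_of_lt hN, pow_zero, mul_one]
      exact hM N hN
    · have hM0 : 0 ≤ M := (abs_nonneg _).trans (hM 0 hq)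
      have hρ0 : 0 ≤ ρ := sum_nonneg fun _ _ => abs_nonneg _
      obtain ⟨m, hm⟩ : ∃ m, N / q = m + 1 :=
        ⟨N / q - 1, by have := (Nat.one_le_div_iff hq).mpr hN; omega⟩
      have hprev : ∀ k ∈ Icc 1 q, |x (N - k)| ≤ M * ρ ^ m := by
        intro k hk
        obtain ⟨hk1, hkq⟩ := mem_Icc.mp hk
        have hblock : m ≤ (N - k) / q := by
          have := Nat.div_sub_one_le_sub_div (n := N) hkq
          omega
        calc |x (N - k)| ≤ M * ρ ^ ((N - k) / q) := ih _ (by omega)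
          _ ≤ M * ρ ^ m := mul_le_mul_of_nonneg_left (pow_le_pow_of_le_one hρ0 hγ hblock) hM0
      calc |x N| = |∑ k ∈ Icc 1 q, γ k * x (N - k)| := by rw [hrec N hN]
        _ ≤ ρ * (M * ρ ^ m) := abs_sum_mul_le_of_abs_le _ _ _ hprev
        _ = M * ρ ^ (N / q) := by rw [hm, pow_succ]; ring

/-- Geometric decay of solutions of the linear recurrence
`x N = ∑ₖ γₖ x_{N-k}` when `∑ₖ |γₖ| < 1`. -/
theorem stmt_1 (q : ℕ) (hq : 1 ≤ q) (γ : ℕ → ℝ)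
    (γbar : ℝ) (hγbar : γbar = ∑ i ∈ Finset.Icc 1 q, |γ i|)
    (hγ0 : 0 < γbar) (hγ1 : γbar < 1)
    (x : ℕ → ℝ)
    (hrec : ∀ N, q ≤ N → x N = ∑ k ∈ Finset.Icc 1 q, γ k * x (N - k)) :
    ∃ C > (0:ℝ), ∀ N : ℕ, |x N| ≤ C * γbar ^ ((N : ℝ) / (2 * q)) := by
  set M := 1 + ∑ j ∈ range q, |x j|
  have hM : ∀ j < q, |x j| ≤ M := fun j hj => by
    have := single_le_sum (fun i _ => abs_nonneg (x i)) (mem_range.mpr hj)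
    linarith
  have hM0 : 0 < M := by positivity
  refine ⟨M / γbar, div_pos hM0 hγ0, fun N => ?_⟩
  have hexp : (N : ℝ) / (2 * q) ≤ N / q := by
    rw [show (N : ℝ) / (2 * q) = N / q / 2 by ring]
    exact half_le_self (by positivity)
  calc |x N| ≤ M * γbar ^ (N / q) := by
        rw [hγbar]; exact abs_le_mul_pow_div_of_recurrence hq (hγbar ▸ hγ1.le) hM hrec N
    _ ≤ M * (γbar⁻¹ * γbar ^ ((N : ℝ) / q)) := by
        gcongr; exact pow_div_le_inv_mul_rpow hγ0 hγ1.le N q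
    _ ≤ M * (γbar⁻¹ * γbar ^ ((N : ℝ) / (2 * q))) := by
        have := Real.rpow_le_rpow_of_exponent_ge hγ0 hγ1.le hexp
        gcongr
    _ = M / γbar * γbar ^ ((N : ℝ) / (2 * q)) := by ring
end

section
/- For every integer N ≥ 2, Σ_{i=1}^q γ_i^{(1)} − Σ_{i=1}^q γ_i^{(N)} = (1 − Σ_{i=1}^q γ_i)·Σ_{k=1}^{N−1} γ_1^{(k)}. (This telescoping identity for the recursively defined coefficients is used in the proof of Proposition 1.) -/
/-!
Both the one-step identity and the claim are telescoping sums. Summing the recursion over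
`i ∈ [1, q]`, the shifted terms `γ_{i+1}^{(N-1)}` telescope against `∑ᵢ γ_i^{(N-1)}` up to the
first term `γ_1^{(N-1)}` (the last one vanishes by convention), so the total mass drops by
`(1 - ∑ᵢ γᵢ) γ_1^{(N-1)}` at each step; summing these drops over `N` telescopes again.
-/

open Finset

theorem sum_Icc_sub_sum_Icc_of_shift {R : Type*} [CommRing R] {q : ℕ} (hq : 1 ≤ q)
    {γ a b : ℕ → R} (hlast : a (q + 1) = 0)
    (hstep : ∀ i ∈ Icc 1 q, b i = a 1 * γ i + a (i + 1)) :
    ∑ i ∈ Icc 1 q, a i - ∑ i ∈ Icc 1 q, b i = (1 - ∑ i ∈ Icc 1 q, γ i) * a 1 := by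
  have htelescope := sum_Icc_sub hq a
  rw [sum_sub_distrib, hlast] at htelescope
  rw [sum_congr rfl hstep, sum_add_distrib, ← mul_sum]
  linear_combination -htelescope

/-- Telescoping identity for the recursively defined
coefficients `γᵢ⁽ᴺ⁾` from the proof of Proposition 1: here `g N i = γᵢ⁽ᴺ⁾`. -/
theorem stmt_2 (q : ℕ) (hq : 1 ≤ q) (γ : ℕ → ℝ)
    (g : ℕ → ℕ → ℝ)
    (hconv : ∀ M, g M (q + 1) = 0)
    (hrec : ∀ N, 2 ≤ N → ∀ i, 1 ≤ i → i ≤ q →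
      g N i = g (N - 1) 1 * γ i + g (N - 1) (i + 1)) :
    ∀ N, 2 ≤ N →
      (∑ i ∈ Finset.Icc 1 q, g 1 i) - (∑ i ∈ Finset.Icc 1 q, g N i)
        = (1 - ∑ i ∈ Finset.Icc 1 q, γ i) * (∑ k ∈ Finset.Icc 1 (N - 1), g k 1) := by
  intro N hN
  set mass : ℕ → ℝ := fun k ↦ ∑ i ∈ Icc 1 q, g k i
  have hdrop : ∀ k ∈ Icc 1 (N - 1), mass k - mass (k + 1) = (1 - ∑ i ∈ Icc 1 q, γ i) * g k 1 :=
    fun k hk ↦ sum_Icc_sub_sum_Icc_of_shift hq (hconv k) fun i hi ↦ by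
      simpa using hrec (k + 1) (by grind) i (mem_Icc.1 hi).1 (mem_Icc.1 hi).2
  have htelescope := sum_Icc_sub (m := 1) (n := N - 1) (by omega) mass
  rw [Nat.sub_add_cancel (by omega)] at htelescope
  calc mass 1 - mass N = ∑ k ∈ Icc 1 (N - 1), (mass k - mass (k + 1)) := by
        rw [sum_sub_distrib] at htelescope ⊢
        linear_combination htelescope
    _ = _ := by rw [sum_congr rfl hdrop, mul_sum]
end

section
/- For every integer j ≥ 1, A_j − Σ_{k=1}^{min(j−1, q)} γ_k·A_{j−k} = 1_{j ≤ q}·γ_j·g_{−1}·α_1 + (g_0 − γ_1·g_{−1})·α_j + g_{−1}·α_{j+1}. In particular, the left-hand side vanishes for all j ≥ (p∨q)+1, and, upon taking g_{−1} = 2ϱ_3 and g_0 = ϱ_1 − ϱ_2 + 2ϱ_3·γ_1, it equals the DR Beta coefficient α_j^g = 1_{j ≤ q}·2ϱ_3·γ_j·α_1 + 1_{j ≤ p}·(ϱ_1 − ϱ_2)·α_j + 1_{j ≤ p−1}·2ϱ_3·α_{j+1} of Proposition 1(a). -/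
/-! Write `e m := g m - ∑_{k=1}^q γ_k g_{m-k}` for the innovation of `g`. The recurrence makes
`e m = 0` for `m ≥ 1`, and since `g` vanishes below `-1` the only nonzero values are
`e (-1) = g (-1)` and `e 0 = g 0 - γ 1 * g (-1)`. Truncating the sum at `min (j - 1) q` only
restores the term `γ_j g_{-1}` (present when `j ≤ q`, at `m = j - 1`). Since `A` is the
convolution of `g` with `α`, the left-hand side is `∑_s α_s` times the truncated innovation at
`j - s`, and the three surviving terms sit at `s = 1`, `s = j` and `s = j + 1`. -/

open Finset

variable {R : Type*} [CommRing R]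

lemma sum_Icc_one_eq_add_sum_Ioc {M : Type*} [AddCommMonoid M] (f : ℤ → M) {n q : ℤ}
    (hn : 0 ≤ n) (hnq : n ≤ q) :
    ∑ k ∈ Icc 1 q, f k = ∑ k ∈ Icc 1 n, f k + ∑ k ∈ Ioc n q, f k := by
  rw [← sum_union (disjoint_left.2 fun x hx hx' => by
    simp only [mem_Icc, mem_Ioc] at hx hx'; omega)]
  congr 1
  ext x
  simp only [mem_Icc, mem_Ioc, mem_union]
  omega

lemma sum_Icc_ite_eq_mul {p : ℤ} {α : ℤ → R}
    (hα : ∀ s : ℤ, p < s ∨ s ≤ 0 → α s = 0) (t : ℤ) (c : R) :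
    ∑ s ∈ Icc 1 p, (if s = t then c else 0) * α s = c * α t := by
  simp only [ite_mul, zero_mul, sum_ite_eq']
  split_ifs with ht
  · rfl
  · rw [hα t (by simp only [mem_Icc] at ht; omega), mul_zero]

section Recurrence

variable {q : ℤ} {γ g : ℤ → R}

lemma sub_sum_Icc_eq_of_rec (hq : 1 ≤ q) (hg0 : ∀ m : ℤ, m ≤ -2 → g m = 0)
    (hgrec : ∀ m : ℤ, 1 ≤ m → g m = ∑ k ∈ Icc 1 q, γ k * g (m - k)) (m : ℤ) :
    g m - ∑ k ∈ Icc 1 q, γ k * g (m - k)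
      = (if m = 0 then g 0 - γ 1 * g (-1) else 0) + (if m = -1 then g (-1) else 0) := by
  rcases (show m ≤ -2 ∨ m = -1 ∨ m = 0 ∨ 1 ≤ m by omega) with hm | rfl | rfl | hm
  · rw [hg0 m hm, if_neg (by omega), if_neg (by omega),
      sum_eq_zero fun k hk => by rw [hg0 (m - k) (by simp only [mem_Icc] at hk; omega), mul_zero]]
    ring
  · rw [sum_eq_zero fun k hk => by
      rw [hg0 (-1 - k) (by simp only [mem_Icc] at hk; omega), mul_zero]]
    simp
  · rw [sum_eq_single_of_mem 1 (by simp only [mem_Icc]; omega)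
      fun k hk _ => by rw [hg0 (0 - k) (by simp only [mem_Icc] at hk; omega), mul_zero]]
    simp
  · rw [← hgrec m hm, if_neg (by omega), if_neg (by omega)]
    ring

lemma sum_Ioc_min_eq (hg0 : ∀ m : ℤ, m ≤ -2 → g m = 0) {j m : ℤ} (hm : m ≤ j - 1) :
    ∑ k ∈ Ioc (min (j - 1) q) q, γ k * g (m - k)
      = if j ≤ q ∧ m = j - 1 then γ j * g (-1) else 0 := by
  split_ifs with h
  · rw [sum_eq_single_of_mem j (by simp only [mem_Ioc]; omega)
      fun k hk _ => by rw [hg0 (m - k) (by simp only [mem_Ioc] at hk; omega), mul_zero]]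
    rw [h.2, sub_sub_cancel_left]
  · exact sum_eq_zero fun k hk => by
      rw [hg0 (m - k) (by simp only [mem_Ioc] at hk; omega), mul_zero]

lemma sub_sum_Icc_min_eq_of_rec (hq : 1 ≤ q) (hg0 : ∀ m : ℤ, m ≤ -2 → g m = 0)
    (hgrec : ∀ m : ℤ, 1 ≤ m → g m = ∑ k ∈ Icc 1 q, γ k * g (m - k))
    {j m : ℤ} (hj : 1 ≤ j) (hm : m ≤ j - 1) :
    g m - ∑ k ∈ Icc 1 (min (j - 1) q), γ k * g (m - k)
      = (if j ≤ q ∧ m = j - 1 then γ j * g (-1) else 0)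
        + (if m = 0 then g 0 - γ 1 * g (-1) else 0) + (if m = -1 then g (-1) else 0) := by
  have hsplit := sum_Icc_one_eq_add_sum_Ioc (fun k => γ k * g (m - k))
    (n := min (j - 1) q) (by omega) (min_le_right _ _)
  rw [add_assoc, ← sub_sum_Icc_eq_of_rec hq hg0 hgrec m, hsplit, sum_Ioc_min_eq hg0 hm]
  ring

end Recurrence

lemma sub_sum_conv_eq {p : ℤ} {γ α g A : ℤ → R}
    (hA : ∀ j, A j = ∑ s ∈ Icc 1 p, g (j - s) * α s) (T : Finset ℤ) (j : ℤ) :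
    A j - ∑ k ∈ T, γ k * A (j - k)
      = ∑ s ∈ Icc 1 p, (g (j - s) - ∑ k ∈ T, γ k * g (j - s - k)) * α s := by
  simp only [hA, mul_sum, sub_mul, sum_mul, sum_sub_distrib]
  rw [sum_comm]
  congr 1
  refine sum_congr rfl fun s _ => sum_congr rfl fun k _ => ?_
  rw [sub_right_comm]
  ring

lemma conv_sub_sum_Icc_min_eq_of_rec {p q : ℤ} (hq : 1 ≤ q) {γ α g A : ℤ → R}
    (hα : ∀ s : ℤ, p < s ∨ s ≤ 0 → α s = 0) (hg0 : ∀ m : ℤ, m ≤ -2 → g m = 0)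
    (hgrec : ∀ m : ℤ, 1 ≤ m → g m = ∑ k ∈ Icc 1 q, γ k * g (m - k))
    (hA : ∀ j, A j = ∑ s ∈ Icc 1 p, g (j - s) * α s) {j : ℤ} (hj : 1 ≤ j) :
    A j - ∑ k ∈ Icc 1 (min (j - 1) q), γ k * A (j - k)
      = (if j ≤ q then γ j * g (-1) * α 1 else 0)
        + (g 0 - γ 1 * g (-1)) * α j + g (-1) * α (j + 1) := by
  have hterm : ∀ s ∈ Icc 1 p,
      (g (j - s) - ∑ k ∈ Icc 1 (min (j - 1) q), γ k * g (j - s - k)) * α s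
        = (if s = 1 then (if j ≤ q then γ j * g (-1) else 0) else 0) * α s
          + (if s = j then g 0 - γ 1 * g (-1) else 0) * α s
          + (if s = j + 1 then g (-1) else 0) * α s := by
    intro s hs
    simp only [mem_Icc] at hs
    rw [sub_sum_Icc_min_eq_of_rec hq hg0 hgrec hj (by omega)]
    split_ifs <;> first | omega | ring
  rw [sub_sum_conv_eq hA, sum_congr rfl hterm, sum_add_distrib, sum_add_distrib,
    sum_Icc_ite_eq_mul hα, sum_Icc_ite_eq_mul hα, sum_Icc_ite_eq_mul hα, ite_mul, zero_mul]

theorem stmt_3_general (p q : ℤ) (hq : 1 ≤ q)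
    (γ α : ℤ → ℝ)
    (hα : ∀ s : ℤ, p < s ∨ s ≤ 0 → α s = 0)
    (g : ℤ → ℝ)
    (hg0 : ∀ m : ℤ, m ≤ -2 → g m = 0)
    (hgrec : ∀ m : ℤ, 1 ≤ m → g m = ∑ k ∈ Finset.Icc 1 q, γ k * g (m - k))
    (A : ℤ → ℝ) (hA : ∀ j, A j = ∑ s ∈ Finset.Icc 1 p, g (j - s) * α s) :
    (∀ j : ℤ, 1 ≤ j →
      A j - (∑ k ∈ Finset.Icc 1 (min (j - 1) q), γ k * A (j - k))
        = (if j ≤ q then γ j * g (-1) * α 1 else 0)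
          + (g 0 - γ 1 * g (-1)) * α j + g (-1) * α (j + 1))
    ∧ (∀ j : ℤ, max p q + 1 ≤ j →
        A j - (∑ k ∈ Finset.Icc 1 (min (j - 1) q), γ k * A (j - k)) = 0)
    ∧ (∀ ϱ1 ϱ2 ϱ3 : ℝ, g (-1) = 2 * ϱ3 → g 0 = ϱ1 - ϱ2 + 2 * ϱ3 * γ 1 →
        ∀ j : ℤ, 1 ≤ j →
          (if j ≤ q then γ j * g (-1) * α 1 else 0)
            + (g 0 - γ 1 * g (-1)) * α j + g (-1) * α (j + 1)
          = (if j ≤ q then 2 * ϱ3 * γ j * α 1 else 0)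
            + (if j ≤ p then (ϱ1 - ϱ2) * α j else 0)
            + (if j ≤ p - 1 then 2 * ϱ3 * α (j + 1) else 0)) := by
  have hαp : ∀ s, ¬s ≤ p → α s = 0 := fun s hs => hα s (.inl (by omega))
  refine ⟨fun j hj => conv_sub_sum_Icc_min_eq_of_rec hq hα hg0 hgrec hA hj, fun j hj => ?_,
    fun ϱ1 ϱ2 ϱ3 h1 h2 j _ => ?_⟩
  · rw [conv_sub_sum_Icc_min_eq_of_rec hq hα hg0 hgrec hA (by omega), if_neg (by omega),
      hαp j (by omega), hαp (j + 1) (by omega)]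
    ring
  · rw [h1, h2, ite_eq_left_iff.2 fun h => (mul_eq_zero_of_right _ (hαp j h)).symm,
      ite_eq_left_iff.2 fun h => (mul_eq_zero_of_right _ (hαp (j + 1) (by omega))).symm]
    split_ifs <;> ring

/-- The coefficient identity behind Proposition 1(a):
`A j − ∑_{k=1}^{min(j−1,q)} γ_k A_{j−k}` equals a three-term expression, vanishes
for `j ≥ (p∨q)+1`, and specializes to the DR Beta coefficient `α_j^g`. -/
theorem stmt_3 (p q : ℤ) (hp : 1 ≤ p) (hq : 1 ≤ q)
    (γ α : ℤ → ℝ)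
    (hγ : ∀ k : ℤ, q < k ∨ k ≤ 0 → γ k = 0)
    (hα : ∀ s : ℤ, p < s ∨ s ≤ 0 → α s = 0)
    (g : ℤ → ℝ)
    (hg0 : ∀ m : ℤ, m ≤ -2 → g m = 0)
    (hgrec : ∀ m : ℤ, 1 ≤ m → g m = ∑ k ∈ Finset.Icc 1 q, γ k * g (m - k))
    (A : ℤ → ℝ) (hA : ∀ j, A j = ∑ s ∈ Finset.Icc 1 p, g (j - s) * α s) :
    (∀ j : ℤ, 1 ≤ j →
      A j - (∑ k ∈ Finset.Icc 1 (min (j - 1) q), γ k * A (j - k))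
        = (if j ≤ q then γ j * g (-1) * α 1 else 0)
          + (g 0 - γ 1 * g (-1)) * α j + g (-1) * α (j + 1))
    ∧ (∀ j : ℤ, max p q + 1 ≤ j →
        A j - (∑ k ∈ Finset.Icc 1 (min (j - 1) q), γ k * A (j - k)) = 0)
    ∧ (∀ ϱ1 ϱ2 ϱ3 : ℝ, g (-1) = 2 * ϱ3 → g 0 = ϱ1 - ϱ2 + 2 * ϱ3 * γ 1 →
        ∀ j : ℤ, 1 ≤ j →
          (if j ≤ q then γ j * g (-1) * α 1 else 0)
            + (g 0 - γ 1 * g (-1)) * α j + g (-1) * α (j + 1)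
          = (if j ≤ q then 2 * ϱ3 * γ j * α 1 else 0)
            + (if j ≤ p then (ϱ1 - ϱ2) * α j else 0)
            + (if j ≤ p - 1 then 2 * ϱ3 * α (j + 1) else 0)) :=
  stmt_3_general p q hq γ α hα g hg0 hgrec A hA
end

section
/- If Σ_{i=1}^q |γ_i| < 1, then the series Σ_{m=1}^∞ g_m converges absolutely and (1 − Σ_{i=1}^q γ_i)·Σ_{m=1}^∞ g_m = (g_0 + g_{−1})·Σ_{i=1}^q γ_i − g_{−1}·γ_1. (This identity yields the intercept ω^g of the DR Beta representation in Proposition 1(a).) -/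
/-!
Writing `r m := g m - ∑ₖ γₖ g (m - k)` on all of `ℤ`, the recurrence says exactly that `r` is
supported on `{-1, 0}`, with `r (-1) = g (-1)` and `r 0 = g 0 - γ₁ g (-1)`. Taking absolute
values, the partial sums `P` of `|g|` satisfy `P ≤ |r (-1)| + |r 0| + (∑ |γₖ|) P`, so they are
bounded and `g` is absolutely summable over `ℤ`. Summing the definition of `r` over `ℤ` and using
translation invariance of the sum gives `r (-1) + r 0 = (1 - ∑ γₖ) ∑_ℤ g`, where
`∑_ℤ g = g (-1) + g 0 + ∑_{m ≥ 1} g m`.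
-/

open Finset

section PartialSums

variable {f : ℤ → ℝ} {a : ℤ}

lemma sum_Icc_comp_sub_le (hf : 0 ≤ f) (hfa : ∀ m < a, f m = 0) {k : ℤ} (hk : 0 ≤ k) (N : ℤ) :
    ∑ m ∈ Icc a N, f (m - k) ≤ ∑ m ∈ Icc a N, f m :=
  calc ∑ m ∈ Icc a N, f (m - k) = ∑ m ∈ Icc (a - k) (N - k), f m := by
        simp only [sub_eq_add_neg, ← map_add_right_Icc, sum_map, addRightEmbedding_apply]
    _ = ∑ m ∈ Icc a (N - k), f m := by
        refine (sum_subset (Icc_subset_Icc_left (by omega)) fun m hm hm' => hfa m ?_).symm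
        simp only [mem_Icc] at hm hm'
        omega
    _ ≤ ∑ m ∈ Icc a N, f m :=
        sum_le_sum_of_subset_of_nonneg (Icc_subset_Icc_right (by omega)) fun m _ _ => hf m

variable {e : ℤ → ℝ} {K : Finset ℤ} {c : ℤ → ℝ}

lemma sum_Icc_le_of_le_add_sum_comp_sub (hf : 0 ≤ f) (hfa : ∀ m < a, f m = 0)
    (he : 0 ≤ e) (he_sum : Summable e) (hK : ∀ k ∈ K, 0 ≤ k) (hc : ∀ k ∈ K, 0 ≤ c k)
    (hcK : ∑ k ∈ K, c k < 1) (hrec : ∀ m, f m ≤ e m + ∑ k ∈ K, c k * f (m - k)) (N : ℤ) :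
    ∑ m ∈ Icc a N, f m ≤ (∑' m, e m) / (1 - ∑ k ∈ K, c k) := by
  set P := ∑ m ∈ Icc a N, f m
  have hP : P ≤ ∑' m, e m + (∑ k ∈ K, c k) * P :=
    calc P ≤ ∑ m ∈ Icc a N, (e m + ∑ k ∈ K, c k * f (m - k)) := sum_le_sum fun m _ => hrec m
      _ = ∑ m ∈ Icc a N, e m + ∑ k ∈ K, c k * ∑ m ∈ Icc a N, f (m - k) := by
        rw [sum_add_distrib, sum_comm]
        simp only [mul_sum]
      _ ≤ ∑' m, e m + ∑ k ∈ K, c k * P := by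
        gcongr with k hk
        · exact he_sum.sum_le_tsum _ fun m _ => he m
        · exact hc k hk
        · exact sum_Icc_comp_sub_le hf hfa (hK k hk) N
      _ = ∑' m, e m + (∑ k ∈ K, c k) * P := by rw [sum_mul]
  rw [le_div_iff₀ (sub_pos.2 hcK)]
  linarith

lemma summable_of_le_add_sum_comp_sub (hf : 0 ≤ f) (hfa : ∀ m < a, f m = 0)
    (he : 0 ≤ e) (he_sum : Summable e) (hK : ∀ k ∈ K, 0 ≤ k) (hc : ∀ k ∈ K, 0 ≤ c k)
    (hcK : ∑ k ∈ K, c k < 1) (hrec : ∀ m, f m ≤ e m + ∑ k ∈ K, c k * f (m - k)) :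
    Summable f := by
  refine summable_of_sum_le (c := (∑' m, e m) / (1 - ∑ k ∈ K, c k)) hf fun u => ?_
  obtain ⟨lo, hlo⟩ := u.bddBelow
  obtain ⟨hi, hhi⟩ := u.bddAbove
  have hu : u ⊆ Icc (min lo a) hi := fun m hm =>
    mem_Icc.2 ⟨(min_le_left _ _).trans (hlo hm), hhi hm⟩
  calc ∑ m ∈ u, f m ≤ ∑ m ∈ Icc (min lo a) hi, f m :=
        sum_le_sum_of_subset_of_nonneg hu fun m _ _ => hf m
    _ ≤ (∑' m, e m) / (1 - ∑ k ∈ K, c k) :=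
        sum_Icc_le_of_le_add_sum_comp_sub hf (fun m hm => hfa m (hm.trans_le (min_le_right _ _)))
          he he_sum hK hc hcK hrec hi

end PartialSums

section IntSums

variable {R : Type*}

lemma tsum_int_eq_tsum_nat_of_eq_zero [AddCommMonoid R] [TopologicalSpace R] {g : ℤ → R} (a : ℤ)
    (hg : ∀ m < a, g m = 0) : ∑' m, g m = ∑' n : ℕ, g (a + n) := by
  refine (((add_right_injective a).comp Nat.cast_injective).tsum_eq (f := g) fun m hm => ?_).symm
  have ha : a ≤ m := not_lt.1 fun h => hm (hg m h)
  exact ⟨(m - a).toNat, by simp [ha]⟩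

lemma tsum_int_eq_add_add_tsum_nat [AddCommGroup R] [UniformSpace R] [IsUniformAddGroup R]
    [CompleteSpace R] [T2Space R] {g : ℤ → R} (hg : Summable g) (hg0 : ∀ m ≤ -2, g m = 0) :
    ∑' m, g m = g (-1) + g 0 + ∑' n : ℕ, g (n + 1) := by
  have hshift : Summable fun n : ℕ => g (-1 + n) :=
    hg.comp_injective ((add_right_injective (-1)).comp Nat.cast_injective)
  have hshift' : Summable fun n : ℕ => g (-1 + ↑(n + 1)) :=
    hshift.comp_injective (add_left_injective 1)
  rw [tsum_int_eq_tsum_nat_of_eq_zero (-1) fun m hm => hg0 m (by omega),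
    hshift.tsum_eq_zero_add, hshift'.tsum_eq_zero_add, add_assoc]
  push_cast
  ring_nf

end IntSums

section RecurrenceDefect

variable {R : Type*} [Ring R]

def recurrenceDefect (K : Finset ℤ) (γ g : ℤ → R) (m : ℤ) : R :=
  g m - ∑ k ∈ K, γ k * g (m - k)

lemma tsum_recurrenceDefect [TopologicalSpace R] [IsTopologicalRing R] [T2Space R]
    {g : ℤ → R} (hg : Summable g) (K : Finset ℤ) (γ : ℤ → R) :
    ∑' m, recurrenceDefect K γ g m = (1 - ∑ k ∈ K, γ k) * ∑' m, g m := by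
  have hshift (k : ℤ) : ∑' m, g (m - k) = ∑' m, g m := (Equiv.subRight k).tsum_eq g
  have hshift_summable (k : ℤ) : Summable fun m : ℤ => g (m - k) :=
    (Equiv.subRight k).summable_iff.2 hg
  simp only [recurrenceDefect]
  rw [hg.tsum_sub (summable_sum fun k _ => (hshift_summable k).mul_left (γ k)),
    Summable.tsum_finsetSum fun k _ => (hshift_summable k).mul_left (γ k)]
  simp only [(hshift_summable _).tsum_mul_left, hshift, sub_mul, one_mul, sum_mul]

lemma summable_abs_of_summable_recurrenceDefect {K : Finset ℤ} (hK : ∀ k ∈ K, 0 ≤ k)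
    {γ g : ℤ → ℝ} (hγ : ∑ k ∈ K, |γ k| < 1) {a : ℤ} (hga : ∀ m < a, g m = 0)
    (hd : Summable (recurrenceDefect K γ g)) : Summable fun m => |g m| := by
  refine summable_of_le_add_sum_comp_sub (a := a) (fun m => abs_nonneg _)
    (fun m hm => by simp [hga m hm]) (fun m => abs_nonneg _) hd.abs hK
    (fun k _ => abs_nonneg (γ k)) hγ fun m => ?_
  calc |g m| = |recurrenceDefect K γ g m + ∑ k ∈ K, γ k * g (m - k)| := by
        rw [recurrenceDefect, sub_add_cancel]
    _ ≤ |recurrenceDefect K γ g m| + |∑ k ∈ K, γ k * g (m - k)| := abs_add_le _ _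
    _ ≤ |recurrenceDefect K γ g m| + ∑ k ∈ K, |γ k| * |g (m - k)| := by
        grw [abs_sum_le_sum_abs]
        simp only [abs_mul, le_rfl]

variable {q : ℤ} {γ g : ℤ → R}

lemma sum_Icc_mul_comp_sub_eq_zero (hg0 : ∀ m ≤ -2, g m = 0) {m : ℤ} (hm : m ≤ -1) :
    ∑ k ∈ Icc 1 q, γ k * g (m - k) = 0 :=
  sum_eq_zero fun k hk => by rw [hg0 _ (by linarith [(mem_Icc.1 hk).1]), mul_zero]

lemma recurrenceDefect_eq_zero (hg0 : ∀ m ≤ -2, g m = 0)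
    (hgrec : ∀ m, 1 ≤ m → g m = ∑ k ∈ Icc 1 q, γ k * g (m - k)) :
    ∀ m ∉ ({-1, 0} : Finset ℤ), recurrenceDefect (Icc 1 q) γ g m = 0 := by
  intro m hm
  simp only [mem_insert, mem_singleton, not_or] at hm
  rcases le_or_gt 1 m with h | h
  · exact sub_eq_zero.2 (hgrec m h)
  · rw [recurrenceDefect, hg0 m (by omega), sum_Icc_mul_comp_sub_eq_zero hg0 (by omega), sub_zero]

lemma recurrenceDefect_neg_one (hg0 : ∀ m ≤ -2, g m = 0) :
    recurrenceDefect (Icc 1 q) γ g (-1) = g (-1) := by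
  rw [recurrenceDefect, sum_Icc_mul_comp_sub_eq_zero hg0 le_rfl, sub_zero]

lemma recurrenceDefect_zero (hq : 1 ≤ q) (hg0 : ∀ m ≤ -2, g m = 0) :
    recurrenceDefect (Icc 1 q) γ g 0 = g 0 - γ 1 * g (-1) := by
  refine congrArg (g 0 - ·) (sum_eq_single_of_mem 1 (mem_Icc.2 ⟨le_rfl, hq⟩) fun k hk hk1 => ?_)
  have hk2 : 2 ≤ k := lt_of_le_of_ne (mem_Icc.1 hk).1 (Ne.symm hk1)
  rw [hg0 _ (by omega), mul_zero]

end RecurrenceDefect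

theorem stmt_4_general (q : ℤ) (hq : 1 ≤ q) (γ : ℤ → ℝ)
    (g : ℤ → ℝ)
    (hg0 : ∀ m : ℤ, m ≤ -2 → g m = 0)
    (hgrec : ∀ m : ℤ, 1 ≤ m → g m = ∑ k ∈ Finset.Icc 1 q, γ k * g (m - k))
    (hsum : (∑ i ∈ Finset.Icc 1 q, |γ i|) < 1) :
    Summable (fun m : ℕ => |g ((m : ℤ) + 1)|) ∧
    (1 - ∑ i ∈ Finset.Icc 1 q, γ i) * (∑' m : ℕ, g ((m : ℤ) + 1))
      = (g 0 + g (-1)) * (∑ i ∈ Finset.Icc 1 q, γ i) - g (-1) * γ 1 := by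
  have hd := recurrenceDefect_eq_zero hg0 hgrec
  have habs : Summable fun m => |g m| :=
    summable_abs_of_summable_recurrenceDefect (fun k hk => by linarith [(mem_Icc.1 hk).1]) hsum
      (a := -1) (fun m hm => hg0 m (by omega)) (summable_of_ne_finset_zero hd)
  refine ⟨habs.comp_injective ((add_left_injective 1).comp Nat.cast_injective), ?_⟩
  have key := tsum_recurrenceDefect habs.of_abs (Icc 1 q) γ
  rw [tsum_eq_sum hd, sum_pair (by norm_num), recurrenceDefect_neg_one hg0,
    recurrenceDefect_zero hq hg0, tsum_int_eq_add_add_tsum_nat habs.of_abs hg0] at key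
  linear_combination -key

/-- If `∑ᵢ|γᵢ| < 1` then `∑_{m≥1} g_m` converges absolutely and
`(1 − ∑γᵢ)·∑_{m≥1} g_m = (g₀ + g₋₁)·∑γᵢ − g₋₁·γ₁`. -/
theorem stmt_4 (q : ℤ) (hq : 1 ≤ q) (γ : ℤ → ℝ)
    (hγ : ∀ k : ℤ, q < k ∨ k ≤ 0 → γ k = 0)
    (g : ℤ → ℝ)
    (hg0 : ∀ m : ℤ, m ≤ -2 → g m = 0)
    (hgrec : ∀ m : ℤ, 1 ≤ m → g m = ∑ k ∈ Finset.Icc 1 q, γ k * g (m - k))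
    (hsum : (∑ i ∈ Finset.Icc 1 q, |γ i|) < 1) :
    Summable (fun m : ℕ => |g ((m : ℤ) + 1)|) ∧
    (1 - ∑ i ∈ Finset.Icc 1 q, γ i) * (∑' m : ℕ, g ((m : ℤ) + 1))
      = (g 0 + g (-1)) * (∑ i ∈ Finset.Icc 1 q, γ i) - g (-1) * γ 1 :=
  stmt_4_general q hq γ g hg0 hgrec hsum
end

section
/- Suppose the pair (𝓖, 𝓗) has mixing coefficient at most ρ̄, and let ξ be an 𝓗-measurable square-integrable random variable with E[ξ] = 0. Then E[(E[ξ | 𝓖])²] ≤ ρ̄²·E[ξ²], i.e. the conditional expectation operator onto 𝓖 contracts centered 𝓗-measurable variables in L² by the factor ρ̄. -/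
open MeasureTheory

/-- The pair `(G, H)` of σ-algebras has mixing coefficient at most `ρ`:
`|E[UV]| ≤ ρ` for all centered, `L²`-normalized `U` (`G`-measurable) and
`V` (`H`-measurable). -/
def mixingCoefLE {Ω : Type*} {_m0 : MeasurableSpace Ω} (μ : Measure Ω)
    (G H : MeasurableSpace Ω) (ρ : ℝ) : Prop :=
  ∀ U V : Ω → ℝ,
    StronglyMeasurable[G] U → StronglyMeasurable[H] V →
    MemLp U 2 μ → MemLp V 2 μ →
    (∫ ω, U ω ∂μ) = 0 → (∫ ω, V ω ∂μ) = 0 →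
    (∫ ω, (U ω) ^ 2 ∂μ) ≤ 1 → (∫ ω, (V ω) ^ 2 ∂μ) ≤ 1 →
    |∫ ω, U ω * V ω ∂μ| ≤ ρ

/-!
Write `η = E[ξ | 𝓖]`. Since `η` is `𝓖`-measurable, the pull-out property gives
`E[ηξ] = E[E[ηξ | 𝓖]] = E[η²]`. The mixing bound, rescaled to arbitrary centered `L²` variables,
then yields `E[η²] = E[ηξ] ≤ ρ̄ ‖η‖₂ ‖ξ‖₂`, and dividing by `‖η‖₂` gives `‖η‖₂ ≤ ρ̄ ‖ξ‖₂`.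
-/

section

variable {Ω : Type*} {m0 : MeasurableSpace Ω} {μ : Measure Ω}

lemma integral_mul_eq_zero_of_integral_sq_eq_zero {U : Ω → ℝ} (V : Ω → ℝ) (hU : MemLp U 2 μ)
    (hU0 : ∫ ω, U ω ^ 2 ∂μ = 0) : ∫ ω, U ω * V ω ∂μ = 0 := by
  have hsq : (fun ω ↦ U ω ^ 2) =ᵐ[μ] 0 :=
    (integral_eq_zero_iff_of_nonneg (fun ω ↦ sq_nonneg _) hU.integrable_sq).mp hU0
  calc ∫ ω, U ω * V ω ∂μ = ∫ _ω, (0 : ℝ) ∂μ :=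
        integral_congr_ae (hsq.mono fun ω hω ↦ by simp_all)
    _ = 0 := integral_zero _ _

lemma integral_sq_inv_sqrt_integral_sq_mul {U : Ω → ℝ} (hU : ∫ ω, U ω ^ 2 ∂μ ≠ 0) :
    ∫ ω, ((√(∫ ω, U ω ^ 2 ∂μ))⁻¹ * U ω) ^ 2 ∂μ = 1 := by
  simp_rw [mul_pow, integral_const_mul, inv_pow,
    Real.sq_sqrt (integral_nonneg fun ω ↦ sq_nonneg (U ω)), inv_mul_cancel₀ hU]

lemma mixingCoefLE.abs_integral_mul_le {G H : MeasurableSpace Ω} {ρ : ℝ}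
    (hmix : mixingCoefLE μ G H ρ) {U V : Ω → ℝ}
    (hUm : StronglyMeasurable[G] U) (hVm : StronglyMeasurable[H] V)
    (hU : MemLp U 2 μ) (hV : MemLp V 2 μ) (hU0 : ∫ ω, U ω ∂μ = 0) (hV0 : ∫ ω, V ω ∂μ = 0) :
    |∫ ω, U ω * V ω ∂μ| ≤ ρ * (√(∫ ω, U ω ^ 2 ∂μ) * √(∫ ω, V ω ^ 2 ∂μ)) := by
  set a := √(∫ ω, U ω ^ 2 ∂μ)
  set b := √(∫ ω, V ω ^ 2 ∂μ)
  by_cases hUsq : ∫ ω, U ω ^ 2 ∂μ = 0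
  · simp [a, hUsq, integral_mul_eq_zero_of_integral_sq_eq_zero V hU hUsq]
  by_cases hVsq : ∫ ω, V ω ^ 2 ∂μ = 0
  · simp_rw [b, hVsq, mul_comm (U _)]
    simp [integral_mul_eq_zero_of_integral_sq_eq_zero U hV hVsq]
  have ha : 0 < a := Real.sqrt_pos.mpr <| (integral_nonneg fun ω ↦ sq_nonneg (U ω)).lt_of_ne' hUsq
  have hb : 0 < b := Real.sqrt_pos.mpr <| (integral_nonneg fun ω ↦ sq_nonneg (V ω)).lt_of_ne' hVsq
  have hnormalized : |∫ ω, (a⁻¹ * U ω) * (b⁻¹ * V ω) ∂μ| ≤ ρ :=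
    hmix _ _ (hUm.const_mul _) (hVm.const_mul _) (hU.const_mul _) (hV.const_mul _)
      (by rw [integral_const_mul, hU0, mul_zero]) (by rw [integral_const_mul, hV0, mul_zero])
      (integral_sq_inv_sqrt_integral_sq_mul hUsq).le
      (integral_sq_inv_sqrt_integral_sq_mul hVsq).le
  have hscale : ∫ ω, (a⁻¹ * U ω) * (b⁻¹ * V ω) ∂μ = (a * b)⁻¹ * ∫ ω, U ω * V ω ∂μ := by
    rw [← integral_const_mul]
    congr 1 with ω
    ring
  rw [hscale, abs_mul, abs_of_pos (by positivity), inv_mul_le_iff₀ (by positivity)] at hnormalized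
  linarith

lemma integral_condExp_mul_self [IsFiniteMeasure μ] {G : MeasurableSpace Ω} (hG : G ≤ m0) {ξ : Ω → ℝ} (hξ : MemLp ξ 2 μ) :
    ∫ ω, (μ[ξ | G]) ω * ξ ω ∂μ = ∫ ω, (μ[ξ | G]) ω ^ 2 ∂μ := by
  have hpull : μ[μ[ξ | G] * ξ | G] =ᵐ[μ] μ[ξ | G] * μ[ξ | G] :=
    condExp_mul_of_stronglyMeasurable_left stronglyMeasurable_condExp
      (memLp_one_iff_integrable.mp (hξ.mul (hξ.condExp one_le_two))) (hξ.integrable one_le_two)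
  calc ∫ ω, (μ[ξ | G]) ω * ξ ω ∂μ = ∫ ω, (μ[μ[ξ | G] * ξ | G]) ω ∂μ :=
        (integral_condExp hG).symm
    _ = ∫ ω, (μ[ξ | G]) ω ^ 2 ∂μ := integral_congr_ae (hpull.mono fun ω hω ↦ by simp [hω, sq])

end

lemma Real.le_sq_mul_of_le_mul_sqrt_mul_sqrt {A B ρ : ℝ} (hA : 0 ≤ A) (hB : 0 ≤ B)
    (h : A ≤ ρ * (√A * √B)) : A ≤ ρ ^ 2 * B := by
  rcases (Real.sqrt_nonneg A).eq_or_lt with hA0 | hApos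
  · rw [eq_comm, Real.sqrt_eq_zero hA] at hA0
    rw [hA0]
    positivity
  have hroot : √A ≤ ρ * √B := by
    refine le_of_mul_le_mul_left ?_ hApos
    calc √A * √A = A := Real.mul_self_sqrt hA
      _ ≤ √A * (ρ * √B) := by linarith
  calc A = √A ^ 2 := (Real.sq_sqrt hA).symm
    _ ≤ (ρ * √B) ^ 2 := pow_le_pow_left₀ hApos.le hroot 2
    _ = ρ ^ 2 * B := by rw [mul_pow, Real.sq_sqrt hB]

theorem stmt_6_general {Ω : Type*} {m0 : MeasurableSpace Ω} (μ : Measure Ω)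
    [IsProbabilityMeasure μ] (G H : MeasurableSpace Ω)
    (hG : G ≤ m0) (ρ : ℝ)
    (hmix : mixingCoefLE μ G H ρ)
    (ξ : Ω → ℝ) (hξm : StronglyMeasurable[H] ξ)
    (hξ2 : MemLp ξ 2 μ) (hξ0 : (∫ ω, ξ ω ∂μ) = 0) :
    (∫ ω, (μ[ξ | G]) ω ^ 2 ∂μ) ≤ ρ ^ 2 * ∫ ω, ξ ω ^ 2 ∂μ := by
  have hcentered : ∫ ω, (μ[ξ | G]) ω ∂μ = 0 := by rw [integral_condExp hG, hξ0]
  have hbound := hmix.abs_integral_mul_le stronglyMeasurable_condExp hξm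
    (hξ2.condExp one_le_two) hξ2 hcentered hξ0
  rw [integral_condExp_mul_self hG hξ2] at hbound
  exact Real.le_sq_mul_of_le_mul_sqrt_mul_sqrt (integral_nonneg fun ω ↦ sq_nonneg _)
    (integral_nonneg fun ω ↦ sq_nonneg _) ((le_abs_self _).trans hbound)

/-- Conditional expectation onto `G` contracts centered
`H`-measurable variables in `L²` by the mixing coefficient `ρ`. -/
theorem stmt_6 {Ω : Type*} {m0 : MeasurableSpace Ω} (μ : Measure Ω)
    [IsProbabilityMeasure μ] (G H : MeasurableSpace Ω)
    (hG : G ≤ m0) (hH : H ≤ m0) (ρ : ℝ) (hρ : 0 ≤ ρ)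
    (hmix : mixingCoefLE μ G H ρ)
    (ξ : Ω → ℝ) (hξm : StronglyMeasurable[H] ξ)
    (hξ2 : MemLp ξ 2 μ) (hξ0 : (∫ ω, ξ ω ∂μ) = 0) :
    (∫ ω, (μ[ξ | G]) ω ^ 2 ∂μ) ≤ ρ ^ 2 * ∫ ω, ξ ω ^ 2 ∂μ :=
  stmt_6_general μ G H hG ρ hmix ξ hξm hξ2 hξ0
end

section
/- Let 𝓐, 𝓑_1, 𝓑_2, 𝓒 be sub-σ-algebras of 𝓕 such that the pair (𝓑_1, 𝓑_2) has mixing coefficient at most ρ_j and the pair (𝓐, 𝓒) has mixing coefficient at most ρ_k. Let ξ be 𝓑_1-measurable and ζ be 𝓑_2-measurable, both with finite fourth moments, and suppose the product ξζ is 𝓒-measurable. Then: (i) |E[ξζ] − E[ξ]E[ζ]| ≤ ρ_j·(E[ξ²])^{1/2}·(E[ζ²])^{1/2}; and (ii) there exists a nonnegative 𝓐-measurable random variable Ψ with (E[Ψ²])^{1/2} ≤ ρ_k·(E[ξ⁴])^{1/4}·(E[ζ⁴])^{1/4} such that |E[ξζ | 𝓐]| ≤ |E[ξ]E[ζ]|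 + ρ_j·(E[ξ²])^{1/2}·(E[ζ²])^{1/2} + Ψ almost surely. (This is the conditional covariance bound of part (c) of the paper's lemma on ρ-mixing conditional moments.) -/
/-!
Applying the mixing inequality to the standardized variables `(X - E X) / σ_X` and
`(Y - E Y) / σ_Y` gives `|Cov(X, Y)| ≤ ρ σ_X σ_Y`; with `Var ≤ E[·²]` this is (i).

For (ii) put `f = ξζ`, `g = E[f | 𝓐]` and `Ψ = |g - E f|`. Pulling the `𝓐`-measurable factor
`g` out of the conditional expectation gives `Cov(g, f) = Var g`, so the mixing inequality for
`(𝓐, 𝓒)` reads `Var g ≤ ρ_k σ_g σ_f`, i.e. `‖Ψ‖₂ = σ_g ≤ ρ_k σ_f ≤ ρ_k ‖ξζ‖₂`, and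
Cauchy–Schwarz bounds `‖ξζ‖₂` by `‖ξ‖₄ ‖ζ‖₄`. Finally `|g| ≤ |E f| + Ψ` and (i) bounds `|E f|`.
-/

open MeasureTheory

open ProbabilityTheory

instance ENNReal.holderTriple_four_four_two : ENNReal.HolderTriple 4 4 2 where
  inv_add_inv_eq_inv := by
    rw [← two_mul, show (4 : ENNReal) = 2 * 2 by norm_num, ENNReal.mul_inv (by simp) (by simp),
      ← mul_assoc, ENNReal.mul_inv_cancel (by simp) (by simp), one_mul]

section Moments

variable {Ω : Type*} {m0 : MeasurableSpace Ω} {μ : Measure Ω} {X Y : Ω → ℝ}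

lemma integral_inv_sqrt_variance_mul_sub_integral_sq (hX : AEMeasurable X μ)
    (h : Var[X; μ] ≠ 0) :
    ∫ ω, ((√Var[X; μ])⁻¹ * (X ω - μ[X])) ^ 2 ∂μ = 1 := by
  simp_rw [mul_pow, integral_const_mul, ← variance_eq_integral hX, inv_pow,
    Real.sq_sqrt (variance_nonneg X μ), inv_mul_cancel₀ h]

lemma sqrt_integral_sq_mul_le (hX : MemLp X 4 μ) (hY : MemLp Y 4 μ) :
    √(∫ ω, (X ω * Y ω) ^ 2 ∂μ)
      ≤ (∫ ω, X ω ^ 4 ∂μ) ^ ((1:ℝ)/4) * (∫ ω, Y ω ^ 4 ∂μ) ^ ((1:ℝ)/4) := by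
  have hX2 : MemLp (fun ω => X ω ^ 2) 2 μ := by simpa only [sq] using hX.mul' hX
  have hY2 : MemLp (fun ω => Y ω ^ 2) 2 μ := by simpa only [sq] using hY.mul' hY
  have cauchy_schwarz := integral_mul_le_Lp_mul_Lq_of_nonneg Real.HolderConjugate.two_two
    (Filter.Eventually.of_forall fun ω => sq_nonneg (X ω))
    (Filter.Eventually.of_forall fun ω => sq_nonneg (Y ω))
    (by simpa using hX2) (by simpa using hY2)
  simp only [Real.rpow_two, ← pow_mul, ← mul_pow] at cauchy_schwarz
  have hquarter : ∀ {a : ℝ}, 0 ≤ a → a ^ ((1:ℝ)/4) = √(a ^ ((1:ℝ)/2)) := fun ha => by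
    rw [Real.sqrt_eq_rpow, ← Real.rpow_mul ha]
    norm_num
  rw [hquarter (integral_nonneg fun ω => by positivity),
    hquarter (integral_nonneg fun ω => by positivity), ← Real.sqrt_mul (by positivity)]
  exact Real.sqrt_le_sqrt cauchy_schwarz

variable [IsProbabilityMeasure μ]

lemma integral_const_mul_sub_integral_eq_zero (hX : Integrable X μ) (c : ℝ) :
    ∫ ω, c * (X ω - μ[X]) ∂μ = 0 := by
  rw [integral_const_mul, integral_sub hX (integrable_const _), integral_const]
  simp

lemma covariance_eq_zero_of_variance_eq_zero (hX : MemLp X 2 μ) (h : Var[X; μ] = 0) :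
    cov[X, Y; μ] = 0 := by
  rw [covariance, integral_eq_zero_of_ae]
  filter_upwards [ae_eq_integral_of_variance_eq_zero hX h] with ω hω
  simp [hω]

lemma covariance_condExp_left_eq_variance {m : MeasurableSpace Ω} (hm : m ≤ m0)
    (hX : MemLp X 2 μ) : cov[μ[X|m], X; μ] = Var[μ[X|m]; μ] := by
  have hXm : MemLp (μ[X|m]) 2 μ := hX.condExp one_le_two
  have pull_out : μ[μ[X|m] * X|m] =ᵐ[μ] μ[X|m] * μ[X|m] :=
    condExp_mul_of_stronglyMeasurable_left stronglyMeasurable_condExp (hXm.integrable_mul hX)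
      (hX.integrable one_le_two)
  rw [covariance_eq_sub hXm hX, variance_eq_sub hXm, integral_condExp hm, ← integral_condExp hm,
    integral_congr_ae pull_out, sq, pow_two]

end Moments

namespace mixingCoefLE

variable {Ω : Type*} {m0 : MeasurableSpace Ω} {μ : Measure Ω} {G H : MeasurableSpace Ω} {ρ : ℝ}
  {X Y : Ω → ℝ}

lemma nonneg (h : mixingCoefLE μ G H ρ) : 0 ≤ ρ := by
  simpa using h 0 0 stronglyMeasurable_zero stronglyMeasurable_zero MemLp.zero MemLp.zero
    (by simp) (by simp) (by simp) (by simp)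

variable [IsProbabilityMeasure μ]

lemma abs_covariance_le (h : mixingCoefLE μ G H ρ)
    (hXm : StronglyMeasurable[G] X) (hYm : StronglyMeasurable[H] Y)
    (hX : MemLp X 2 μ) (hY : MemLp Y 2 μ) :
    |cov[X, Y; μ]| ≤ ρ * √Var[X; μ] * √Var[Y; μ] := by
  by_cases hX0 : Var[X; μ] = 0
  · simp [covariance_eq_zero_of_variance_eq_zero hX hX0, hX0]
  by_cases hY0 : Var[Y; μ] = 0
  · simp [covariance_comm X, covariance_eq_zero_of_variance_eq_zero hY hY0, hY0]
  set s := √Var[X; μ]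
  set t := √Var[Y; μ]
  have hs : 0 < s := Real.sqrt_pos.mpr ((variance_nonneg X μ).lt_of_ne' hX0)
  have ht : 0 < t := Real.sqrt_pos.mpr ((variance_nonneg Y μ).lt_of_ne' hY0)
  have standardized := h (fun ω => s⁻¹ * (X ω - μ[X])) (fun ω => t⁻¹ * (Y ω - μ[Y]))
    ((hXm.sub stronglyMeasurable_const).const_mul _)
    ((hYm.sub stronglyMeasurable_const).const_mul _)
    ((hX.sub (memLp_const _)).const_mul _) ((hY.sub (memLp_const _)).const_mul _)
    (integral_const_mul_sub_integral_eq_zero (hX.integrable one_le_two) _)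
    (integral_const_mul_sub_integral_eq_zero (hY.integrable one_le_two) _)
    (integral_inv_sqrt_variance_mul_sub_integral_sq hX.aemeasurable hX0).le
    (integral_inv_sqrt_variance_mul_sub_integral_sq hY.aemeasurable hY0).le
  have hUV : ∫ ω, s⁻¹ * (X ω - μ[X]) * (t⁻¹ * (Y ω - μ[Y])) ∂μ = (s * t)⁻¹ * cov[X, Y; μ] := by
    rw [covariance, ← integral_const_mul]
    congr 1 with ω
    ring
  rw [hUV, abs_mul, abs_of_pos (by positivity), inv_mul_le_iff₀ (by positivity)] at standardized
  linarith

lemma abs_integral_mul_sub_le (h : mixingCoefLE μ G H ρ)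
    (hXm : StronglyMeasurable[G] X) (hYm : StronglyMeasurable[H] Y)
    (hX : MemLp X 2 μ) (hY : MemLp Y 2 μ) :
    |(∫ ω, X ω * Y ω ∂μ) - (∫ ω, X ω ∂μ) * (∫ ω, Y ω ∂μ)|
      ≤ ρ * √(∫ ω, X ω ^ 2 ∂μ) * √(∫ ω, Y ω ^ 2 ∂μ) := by
  have hcov := h.abs_covariance_le hXm hYm hX hY
  rw [covariance_eq_sub hX hY] at hcov
  refine hcov.trans ?_
  have := h.nonneg
  gcongr
  · exact variance_le_expectation_sq hX.1
  · exact variance_le_expectation_sq hY.1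

lemma sqrt_variance_condExp_le {m : MeasurableSpace Ω} (h : mixingCoefLE μ m H ρ) (hm : m ≤ m0)
    (hXm : StronglyMeasurable[H] X) (hX : MemLp X 2 μ) :
    √Var[μ[X|m]; μ] ≤ ρ * √Var[X; μ] := by
  have hcov := h.abs_covariance_le stronglyMeasurable_condExp hXm (hX.condExp one_le_two) hX
  rw [covariance_condExp_left_eq_variance hm hX, abs_of_nonneg (variance_nonneg _ _)] at hcov
  nth_rewrite 1 [← Real.mul_self_sqrt (variance_nonneg (μ[X|m]) μ)] at hcov
  by_contra! hlt
  have hpos : 0 < √Var[μ[X|m]; μ] :=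
    (mul_nonneg h.nonneg (Real.sqrt_nonneg _)).trans_lt hlt
  nlinarith [mul_lt_mul_of_pos_left hlt hpos]

end mixingCoefLE

theorem stmt_10_general {Ω : Type*} {m0 : MeasurableSpace Ω} (μ : Measure Ω)
    [IsProbabilityMeasure μ]
    (𝓐 𝓑₁ 𝓑₂ 𝓒 : MeasurableSpace Ω)
    (h𝓐 : 𝓐 ≤ m0)
    (ρj ρk : ℝ)
    (hmixB : mixingCoefLE μ 𝓑₁ 𝓑₂ ρj)
    (hmixAC : mixingCoefLE μ 𝓐 𝓒 ρk)
    (ξ ζ : Ω → ℝ)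
    (hξm : StronglyMeasurable[𝓑₁] ξ) (hζm : StronglyMeasurable[𝓑₂] ζ)
    (hξ4 : MemLp ξ 4 μ) (hζ4 : MemLp ζ 4 μ)
    (hprod : StronglyMeasurable[𝓒] (fun ω => ξ ω * ζ ω)) :
    |(∫ ω, ξ ω * ζ ω ∂μ) - (∫ ω, ξ ω ∂μ) * (∫ ω, ζ ω ∂μ)|
        ≤ ρj * Real.sqrt (∫ ω, ξ ω ^ 2 ∂μ) * Real.sqrt (∫ ω, ζ ω ^ 2 ∂μ)
    ∧ ∃ Ψ : Ω → ℝ, StronglyMeasurable[𝓐] Ψ ∧ (∀ ω, 0 ≤ Ψ ω) ∧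
        Real.sqrt (∫ ω, Ψ ω ^ 2 ∂μ)
            ≤ ρk * (∫ ω, ξ ω ^ 4 ∂μ) ^ ((1:ℝ)/4) * (∫ ω, ζ ω ^ 4 ∂μ) ^ ((1:ℝ)/4)
        ∧ ∀ᵐ ω ∂μ,
            |(μ[fun ω' => ξ ω' * ζ ω' | 𝓐]) ω|
              ≤ |(∫ ω', ξ ω' ∂μ) * (∫ ω', ζ ω' ∂μ)|
                + ρj * Real.sqrt (∫ ω', ξ ω' ^ 2 ∂μ) *
                    Real.sqrt (∫ ω', ζ ω' ^ 2 ∂μ)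
                + Ψ ω := by
  set f := fun ω => ξ ω * ζ ω
  have hρk := hmixAC.nonneg
  have hf : MemLp f 2 μ := hζ4.mul' hξ4
  have hcov := hmixB.abs_integral_mul_sub_le hξm hζm (hξ4.mono_exponent (by norm_num))
    (hζ4.mono_exponent (by norm_num))
  refine ⟨hcov, fun ω => |μ[f|𝓐] ω - μ[f]|,
    continuous_abs.comp_stronglyMeasurable
      (stronglyMeasurable_condExp.sub stronglyMeasurable_const),
    fun ω => abs_nonneg _, ?_, Filter.Eventually.of_forall fun ω => ?_⟩
  · calc √(∫ ω, |μ[f|𝓐] ω - μ[f]| ^ 2 ∂μ) = √Var[μ[f|𝓐]; μ] := by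
          simp only [sq_abs, variance_eq_integral (hf.condExp one_le_two).aemeasurable,
            integral_condExp h𝓐]
      _ ≤ ρk * √Var[f; μ] := hmixAC.sqrt_variance_condExp_le h𝓐 hprod hf
      _ ≤ ρk * √(∫ ω, f ω ^ 2 ∂μ) := by
          gcongr
          exact variance_le_expectation_sq hf.1
      _ ≤ _ := by
          rw [mul_assoc]
          gcongr
          exact sqrt_integral_sq_mul_le hξ4 hζ4
  · have hmean := abs_sub_abs_le_abs_sub (μ[f]) ((∫ ω, ξ ω ∂μ) * ∫ ω, ζ ω ∂μ)
    have hcond := abs_sub_abs_le_abs_sub (μ[f|𝓐] ω) (μ[f])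
    linarith

/-- Covariance and conditional covariance bounds under
ρ-mixing (part (c) of the paper's lemma on ρ-mixing conditional moments). -/
theorem stmt_10 {Ω : Type*} {m0 : MeasurableSpace Ω} (μ : Measure Ω)
    [IsProbabilityMeasure μ]
    (𝓐 𝓑₁ 𝓑₂ 𝓒 : MeasurableSpace Ω)
    (h𝓐 : 𝓐 ≤ m0) (h𝓑₁ : 𝓑₁ ≤ m0) (h𝓑₂ : 𝓑₂ ≤ m0) (h𝓒 : 𝓒 ≤ m0)
    (ρj ρk : ℝ) (hρj : 0 ≤ ρj) (hρk : 0 ≤ ρk)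
    (hmixB : mixingCoefLE μ 𝓑₁ 𝓑₂ ρj)
    (hmixAC : mixingCoefLE μ 𝓐 𝓒 ρk)
    (ξ ζ : Ω → ℝ)
    (hξm : StronglyMeasurable[𝓑₁] ξ) (hζm : StronglyMeasurable[𝓑₂] ζ)
    (hξ4 : MemLp ξ 4 μ) (hζ4 : MemLp ζ 4 μ)
    (hprod : StronglyMeasurable[𝓒] (fun ω => ξ ω * ζ ω)) :
    |(∫ ω, ξ ω * ζ ω ∂μ) - (∫ ω, ξ ω ∂μ) * (∫ ω, ζ ω ∂μ)|
        ≤ ρj * Real.sqrt (∫ ω, ξ ω ^ 2 ∂μ) * Real.sqrt (∫ ω, ζ ω ^ 2 ∂μ)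
    ∧ ∃ Ψ : Ω → ℝ, StronglyMeasurable[𝓐] Ψ ∧ (∀ ω, 0 ≤ Ψ ω) ∧
        Real.sqrt (∫ ω, Ψ ω ^ 2 ∂μ)
            ≤ ρk * (∫ ω, ξ ω ^ 4 ∂μ) ^ ((1:ℝ)/4) * (∫ ω, ζ ω ^ 4 ∂μ) ^ ((1:ℝ)/4)
        ∧ ∀ᵐ ω ∂μ,
            |(μ[fun ω' => ξ ω' * ζ ω' | 𝓐]) ω|
              ≤ |(∫ ω', ξ ω' ∂μ) * (∫ ω', ζ ω' ∂μ)|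
                + ρj * Real.sqrt (∫ ω', ξ ω' ^ 2 ∂μ) *
                    Real.sqrt (∫ ω', ζ ω' ^ 2 ∂μ)
                + Ψ ω :=
  stmt_10_general μ 𝓐 𝓑₁ 𝓑₂ 𝓒 h𝓐 ρj ρk hmixB hmixAC ξ ζ hξm hζm hξ4 hζ4 hprod
end

section
/- For every r ≥ 1 there exists a constant C > 0, depending only on r, such that: for all real numbers x_1, x_2, y_1, y_2 and all positive reals u'_1 < u_1 < u''_1 and u'_2 < u_2 < u''_2 with u''_1 ≤ r·u'_1 and u''_2 ≤ r·u'_2, one has |(x_1 + y_1)(x_2 + y_2)·1_{|x_1 + y_1| ≤ u_1, |x_2 + y_2| ≤ u_2} − x_1·x_2| ≤ C·[ |x_1 x_2|·1_{|x_1| > u'_1/2, |x_2| ≤ u'_2/2} + |x_1 x_2|·1_{|x_2| > u'_2/2, |x_1| ≤ u'_1/2} + |x_1 x_2|·1_{|x_1| > u'_1/2, |x_2| > u'_2/2} + u''_1·|x_2|·min(|y_1|/u''_1, 1) + u''_2·|x_1|·min(|y_2|/u''_2, 1) + u''_1·u''_2·min(|y_1|/u''_1, 1)·min(|y_2|/u''_2,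 1) ]. -/
/-!
With `Mᵢ = min |yᵢ| u''ᵢ = u''ᵢ · min (|yᵢ| / u''ᵢ) 1`, and the three indicators adding up to the
indicator that some `|xᵢ| > u'ᵢ / 2`, the constant `C = 3` works.
If the product survives the truncation then `|xᵢ + yᵢ| ≤ u''ᵢ`, so `|yᵢ| ≤ Mᵢ + |xᵢ|`, and even
`|yᵢ| ≤ 3/2 · Mᵢ` when `|xᵢ| ≤ u'ᵢ / 2`; the error `x₁y₂ + y₁x₂ + y₁y₂` is then bounded termwise.
If it is truncated away while both `|xᵢ| ≤ u'ᵢ / 2`, then some `|yᵢ| > u'ᵢ / 2 ≥ |xᵢ|`, so `Mᵢ`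
dominates `|xᵢ|` in `|x₁x₂|`.
-/

lemma abs_add_mul_add_sub_mul_le {x₁ x₂ y₁ y₂ b₁ b₂ : ℝ} (hy₁ : |y₁| ≤ b₁) (hy₂ : |y₂| ≤ b₂) :
    |(x₁ + y₁) * (x₂ + y₂) - x₁ * x₂| ≤ |x₁| * b₂ + b₁ * |x₂| + b₁ * b₂ :=
  calc |(x₁ + y₁) * (x₂ + y₂) - x₁ * x₂| = |x₁ * y₂ + y₁ * x₂ + y₁ * y₂| := by ring_nf
    _ ≤ |x₁| * |y₂| + |y₁| * |x₂| + |y₁| * |y₂| := by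
      simpa only [abs_mul] using abs_add_three (x₁ * y₂) (y₁ * x₂) (y₁ * y₂)
    _ ≤ |x₁| * b₂ + b₁ * |x₂| + b₁ * b₂ := by
      have hb₁ : 0 ≤ b₁ := (abs_nonneg y₁).trans hy₁
      gcongr

lemma abs_le_abs_add_add_abs (x y : ℝ) : |y| ≤ |x + y| + |x| := by
  simpa using abs_sub (x + y) x

lemma abs_le_min_add_abs {x y v : ℝ} (h : |x + y| ≤ v) : |y| ≤ min |y| v + |x| := by
  rcases le_total |y| v with hy | hy
  · rw [min_eq_left hy]; linarith [abs_nonneg x]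
  · rw [min_eq_right hy]; linarith [abs_le_abs_add_add_abs x y]

lemma abs_le_three_halves_mul_min {x y v : ℝ} (h : |x + y| ≤ v) (hx : |x| ≤ v / 2) :
    |y| ≤ 3 / 2 * min |y| v := by
  rcases le_total |y| v with hy | hy
  · rw [min_eq_left hy]; linarith [abs_nonneg y]
  · rw [min_eq_right hy]; linarith [abs_le_abs_add_add_abs x y]

lemma abs_le_min_of_lt_abs_add {x y w v : ℝ} (h : w < |x + y|) (hx : |x| ≤ w / 2)
    (hwv : w ≤ v) : |x| ≤ min |y| v :=
  le_min (by linarith [abs_add_le x y]) (by linarith [abs_nonneg x])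

lemma mul_min_div_one {a c : ℝ} (hc : 0 < c) : c * min (a / c) 1 = min a c := by
  rw [mul_min_of_nonneg _ _ hc.le, mul_div_cancel₀ _ hc.ne', mul_one]

lemma ite_and_add_ite_and_add_ite_and {a b c d : ℝ} :
    ((if a < b ∧ c ≤ d then (1 : ℝ) else 0) + (if d < c ∧ b ≤ a then 1 else 0)
      + if a < b ∧ d < c then 1 else 0) = if a < b ∨ d < c then 1 else 0 := by
  rcases lt_or_ge a b with hab | hab <;> rcases lt_or_ge d c with hdc | hdc
  · simp only [hab, hdc, hab.not_ge, hdc.not_ge]; norm_num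
  · simp [hab, hdc, hdc.not_gt]
  · simp [hab, hdc, hab.not_gt]
  · simp [hab.not_gt, hdc.not_gt]

section TruncatedProduct

variable {x₁ x₂ y₁ y₂ u₁ u₂ v₁ v₂ : ℝ}

lemma abs_truncated_mul_sub_mul_le (huv₁ : u₁ ≤ v₁) (huv₂ : u₂ ≤ v₂) (hv₁ : 0 ≤ v₁)
    (hv₂ : 0 ≤ v₂) :
    |(x₁ + y₁) * (x₂ + y₂) * (if |x₁ + y₁| ≤ u₁ ∧ |x₂ + y₂| ≤ u₂ then (1 : ℝ) else 0)
        - x₁ * x₂|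
      ≤ 3 * (|x₁ * x₂| + |x₂| * min |y₁| v₁ + |x₁| * min |y₂| v₂
        + min |y₁| v₁ * min |y₂| v₂) := by
  have hM₁ : 0 ≤ min |y₁| v₁ := le_min (abs_nonneg _) hv₁
  have hM₂ : 0 ≤ min |y₂| v₂ := le_min (abs_nonneg _) hv₂
  have hx₁M₂ := mul_nonneg (abs_nonneg x₁) hM₂
  have hx₂M₁ := mul_nonneg (abs_nonneg x₂) hM₁
  have hM₁M₂ := mul_nonneg hM₁ hM₂
  have hx₁x₂ := mul_nonneg (abs_nonneg x₁) (abs_nonneg x₂)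
  rw [abs_mul]
  split_ifs with hkept
  · rw [mul_one]
    have := abs_add_mul_add_sub_mul_le (abs_le_min_add_abs (hkept.1.trans huv₁))
      (abs_le_min_add_abs (hkept.2.trans huv₂)) (x₁ := x₁) (x₂ := x₂)
    linarith
  · rw [mul_zero, zero_sub, abs_neg, abs_mul]
    linarith

lemma abs_truncated_mul_sub_mul_le_of_small {w₁ w₂ : ℝ} (hx₁ : |x₁| ≤ w₁ / 2)
    (hx₂ : |x₂| ≤ w₂ / 2) (hwu₁ : w₁ ≤ u₁) (hwu₂ : w₂ ≤ u₂) (huv₁ : u₁ ≤ v₁)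
    (huv₂ : u₂ ≤ v₂) :
    |(x₁ + y₁) * (x₂ + y₂) * (if |x₁ + y₁| ≤ u₁ ∧ |x₂ + y₂| ≤ u₂ then (1 : ℝ) else 0)
        - x₁ * x₂|
      ≤ 3 * (|x₂| * min |y₁| v₁ + |x₁| * min |y₂| v₂ + min |y₁| v₁ * min |y₂| v₂) := by
  have hM₁ : 0 ≤ min |y₁| v₁ := le_min (abs_nonneg _) (by linarith [abs_nonneg x₁])
  have hM₂ : 0 ≤ min |y₂| v₂ := le_min (abs_nonneg _) (by linarith [abs_nonneg x₂])
  have hx₁M₂ := mul_nonneg (abs_nonneg x₁) hM₂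
  have hx₂M₁ := mul_nonneg (abs_nonneg x₂) hM₁
  have hM₁M₂ := mul_nonneg hM₁ hM₂
  split_ifs with hkept
  · rw [mul_one]
    have := abs_add_mul_add_sub_mul_le
      (abs_le_three_halves_mul_min (hkept.1.trans huv₁) (by linarith))
      (abs_le_three_halves_mul_min (hkept.2.trans huv₂) (by linarith)) (x₁ := x₁) (x₂ := x₂)
    linarith
  · rw [mul_zero, zero_sub, abs_neg, abs_mul]
    rcases not_and_or.mp hkept with h | h
    · have hx := abs_le_min_of_lt_abs_add (hwu₁.trans_lt (not_le.mp h)) hx₁ (hwu₁.trans huv₁)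
      linarith [mul_le_mul_of_nonneg_right hx (abs_nonneg x₂)]
    · have hx := abs_le_min_of_lt_abs_add (hwu₂.trans_lt (not_le.mp h)) hx₂ (hwu₂.trans huv₂)
      linarith [mul_le_mul_of_nonneg_left hx (abs_nonneg x₁)]

lemma abs_truncated_mul_sub_mul_le_indicator {w₁ w₂ : ℝ} (hw₁ : 0 ≤ w₁) (hw₂ : 0 ≤ w₂)
    (hwu₁ : w₁ ≤ u₁) (hwu₂ : w₂ ≤ u₂) (huv₁ : u₁ ≤ v₁) (huv₂ : u₂ ≤ v₂) :
    |(x₁ + y₁) * (x₂ + y₂) * (if |x₁ + y₁| ≤ u₁ ∧ |x₂ + y₂| ≤ u₂ then (1 : ℝ) else 0)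
        - x₁ * x₂|
      ≤ 3 * (|x₁ * x₂| * (if w₁ / 2 < |x₁| ∨ w₂ / 2 < |x₂| then 1 else 0)
        + |x₂| * min |y₁| v₁ + |x₁| * min |y₂| v₂ + min |y₁| v₁ * min |y₂| v₂) := by
  by_cases hlarge : w₁ / 2 < |x₁| ∨ w₂ / 2 < |x₂|
  · rw [if_pos hlarge, mul_one]
    exact abs_truncated_mul_sub_mul_le huv₁ huv₂ (hw₁.trans (hwu₁.trans huv₁))
      (hw₂.trans (hwu₂.trans huv₂))
  · obtain ⟨hx₁, hx₂⟩ := not_or.mp hlarge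
    rw [if_neg hlarge, mul_zero, zero_add]
    exact abs_truncated_mul_sub_mul_le_of_small (not_lt.mp hx₁) (not_lt.mp hx₂) hwu₁ hwu₂
      huv₁ huv₂

end TruncatedProduct

/-- The deterministic truncation inequality used in the
analysis of jump-truncated pre-averaged spot covariance estimators. -/
theorem stmt_12 :
    ∀ r : ℝ, 1 ≤ r → ∃ C > (0:ℝ),
      ∀ x1 x2 y1 y2 u1 u2 u1' u2' u1'' u2'' : ℝ,
        0 < u1' → u1' < u1 → u1 < u1'' →
        0 < u2' → u2' < u2 → u2 < u2'' →
        u1'' ≤ r * u1' → u2'' ≤ r * u2' →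
        |(x1 + y1) * (x2 + y2) *
              (if |x1 + y1| ≤ u1 ∧ |x2 + y2| ≤ u2 then (1:ℝ) else 0)
            - x1 * x2|
          ≤ C * (|x1 * x2| * (if u1' / 2 < |x1| ∧ |x2| ≤ u2' / 2 then (1:ℝ) else 0)
              + |x1 * x2| * (if u2' / 2 < |x2| ∧ |x1| ≤ u1' / 2 then (1:ℝ) else 0)
              + |x1 * x2| * (if u1' / 2 < |x1| ∧ u2' / 2 < |x2| then (1:ℝ) else 0)
              + u1'' * |x2| * min (|y1| / u1'') 1
              + u2'' * |x1| * min (|y2| / u2'') 1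
              + u1'' * u2'' * min (|y1| / u1'') 1 * min (|y2| / u2'') 1) := by
  intro r _
  refine ⟨3, by norm_num, fun x1 x2 y1 y2 u1 u2 u1' u2' u1'' u2''
    hw₁ hwu₁ huv₁ hw₂ hwu₂ huv₂ _ _ => ?_⟩
  calc _ ≤ _ := abs_truncated_mul_sub_mul_le_indicator hw₁.le hw₂.le hwu₁.le hwu₂.le
        huv₁.le huv₂.le
    _ = _ := by
      rw [← ite_and_add_ite_and_add_ite_and, ← mul_min_div_one (hw₁.trans (hwu₁.trans huv₁)),
        ← mul_min_div_one (hw₂.trans (hwu₂.trans huv₂))]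
      ring
end
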